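/- arXiv:1909.09121 — 3 statements merged into one kernel-verified Lean document; each statement's English description precedes it below -/
import Mathlib

section
/- Let k ∈ ℕ, M ⊆ ℕ^k, and define the entire function g(z) = Σ over (m₁,…,m_k) ∈ M of ∏_{i=1}^k e^{−z} z^{m_i}/m_i! (which agrees with P_z(Γ) for real z > 0, where Γ = {ω : (ω₁,…,ω_k) ∈ M}). Then for every real λ > 0, every δ with 0 < δ < λ, and every z ∈ ℂ with |z − λ| ≤ δ, one has |g(z)| ≤ e^{kδ} Σ_{ℓ=0}^∞ (1 + δ/λ)^ℓ · P_λ(Γ ∩ {ω : ω₁+⋯+ω_k = ℓ}). -/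
/-! On the disc `|z - λ| ≤ δ` we have `|e^{-z}| ≤ e^{δ-λ}` and `|z| ≤ λ + δ`, so
`|e^{-z} z^n / n!| ≤ e^{δ-λ} (λ+δ)^n / n! = e^δ (1 + δ/λ)^n Po_λ(n)`. Hence the term of `g` at
`m ∈ M` is at most `e^{kδ} (1 + δ/λ)^{|m|} P_λ((ω₁,…,ω_k) = m)`, and grouping the terms by
`|m| = ℓ` gives the bound. Everything is summed in `ℝ≥0∞`, where regrouping is unconditional; the
sum is finite because tilting `Po_r` by `t^n` gives `e^{r(t-1)} Po_{tr}`, a finite measure. -/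

open MeasureTheory ProbabilityTheory Filter Topology

/-- `P` is the family of laws of a sequence of i.i.d. Poisson(λ) random variables:
for each `λ > 0`, `P λ` is a probability measure on `ℕ → ℕ` whose finite-dimensional
marginals are finite products of Poisson(λ) distributions.  This characterizes the
countable product of Poisson(λ) measures on `ℕ^ℕ`. -/
def IsPoissonSeedFamily (P : ℝ → Measure (ℕ → ℕ)) : Prop :=
  ∀ lam : ℝ, 0 < lam → IsProbabilityMeasure (P lam) ∧
    ∀ k : ℕ, (P lam).map (fun ω (j : Fin k) => ω j.1)
      = Measure.pi (fun _ : Fin k => poissonMeasure lam.toNNReal)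

/-- The first `k` coordinates `(ω₁, …, ω_k)` of a seed `ω ∈ ℕ^ℕ` (0-indexed). -/
def restrictSeed (k : ℕ) (ω : ℕ → ℕ) : Fin k → ℕ := fun j => ω j.1

/-- An event is `k`-tautologically determined if it is of the form
`{ω : (ω₁, …, ω_k) ∈ B}` for some `B ⊆ ℕ^k`. -/
def TautDetermined (k : ℕ) (A : Set (ℕ → ℕ)) : Prop :=
  ∃ B : Set (Fin k → ℕ), A = {ω | restrictSeed k ω ∈ B}

open scoped ENNReal NNReal

theorem tsum_comp_mul_measure_singleton_eq_tsum_fiber {α β : Type*}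
    [MeasurableSpace α] [Countable α] [MeasurableSingletonClass α]
    [MeasurableSpace β] [Countable β] [MeasurableSingletonClass β]
    (μ : Measure α) (s : Set α) (f : α → β) (w : β → ℝ≥0∞) :
    ∑' a : s, w (f a) * μ {(a : α)} = ∑' b, w b * μ (s ∩ f ⁻¹' {b}) := by
  have hf : Measurable f := .of_discrete
  rw [← lintegral_countable (fun a => w (f a)) s.to_countable, ← lintegral_map .of_discrete hf,
    lintegral_countable']
  congr! 2 with b
  rw [Measure.map_apply hf (measurableSet_singleton b),
    Measure.restrict_apply (hf (measurableSet_singleton b)), Set.inter_comm]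

theorem Complex.norm_exp_neg_mul_pow_div_factorial_le {a δ : ℝ} (ha : 0 ≤ a) {z : ℂ}
    (hz : ‖z - a‖ ≤ δ) (n : ℕ) :
    ‖Complex.exp (-z) * z ^ n / (n.factorial : ℂ)‖ ≤
      Real.exp (δ - a) * (a + δ) ^ n / n.factorial := by
  have hre : a - δ ≤ z.re := by
    have := (Complex.abs_re_le_norm _).trans hz
    rw [Complex.sub_re, Complex.ofReal_re, abs_le] at this
    linarith
  have hnorm : ‖z‖ ≤ a + δ := by
    calc ‖z‖ ≤ ‖(a : ℂ)‖ + ‖z - a‖ := norm_le_norm_add_norm_sub' z a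
      _ ≤ a + δ := by rw [Complex.norm_real, Real.norm_of_nonneg ha]; gcongr
  rw [norm_div, norm_mul, norm_pow, Complex.norm_exp, Complex.norm_natCast, Complex.neg_re]
  gcongr
  linarith

theorem enorm_exp_neg_mul_pow_div_factorial_le {lam δ : ℝ} (hlam : 0 < lam) {z : ℂ}
    (hz : ‖z - lam‖ ≤ δ) (n : ℕ) :
    ‖Complex.exp (-z) * z ^ n / (n.factorial : ℂ)‖ₑ ≤ ENNReal.ofReal (Real.exp δ) *
      ENNReal.ofReal (1 + δ / lam) ^ n * poissonMeasure lam.toNNReal {n} := by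
  have hδ : 0 ≤ δ := (norm_nonneg _).trans hz
  have hfactor : Real.exp (δ - lam) * (lam + δ) ^ n / n.factorial =
      Real.exp δ * (1 + δ / lam) ^ n * (Real.exp (-lam) * lam ^ n / n.factorial) := by
    rw [Real.exp_sub, Real.exp_neg]
    field_simp
    rw [div_pow, div_mul_cancel₀ _ (by positivity)]
  rw [poissonMeasure_singleton, Real.coe_toNNReal _ hlam.le, ← ENNReal.ofReal_pow (by positivity),
    ← ENNReal.ofReal_mul (by positivity), ← ENNReal.ofReal_mul (by positivity), ← hfactor,
    ← ofReal_norm]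
  exact ENNReal.ofReal_le_ofReal (Complex.norm_exp_neg_mul_pow_div_factorial_le hlam.le hz n)

theorem coe_pow_mul_poissonMeasure_singleton (r t : ℝ≥0) (n : ℕ) :
    (t : ℝ≥0∞) ^ n * poissonMeasure r {n} =
      ENNReal.ofReal (Real.exp (r * (t - 1))) * poissonMeasure (t * r) {n} := by
  rw [poissonMeasure_singleton, poissonMeasure_singleton, ← ENNReal.ofReal_coe_nnreal,
    ← ENNReal.ofReal_pow t.coe_nonneg, ← ENNReal.ofReal_mul (by positivity),
    ← ENNReal.ofReal_mul (by positivity)]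
  congr 1
  push_cast
  rw [mul_pow, show -(r : ℝ) = r * (t - 1) + -(t * r) by ring, Real.exp_add]
  ring

theorem enorm_prod_exp_neg_mul_pow_div_factorial_le {lam δ : ℝ} (hlam : 0 < lam) {z : ℂ}
    (hz : ‖z - lam‖ ≤ δ) {k : ℕ} (m : Fin k → ℕ) :
    ‖∏ i, Complex.exp (-z) * z ^ m i / ((m i).factorial : ℂ)‖ₑ ≤
      ENNReal.ofReal (Real.exp (k * δ)) * (ENNReal.ofReal (1 + δ / lam) ^ (∑ i, m i) *
        Measure.pi (fun _ : Fin k => poissonMeasure lam.toNNReal) {m}) := by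
  have hprod : ENNReal.ofReal (Real.exp (k * δ)) * (ENNReal.ofReal (1 + δ / lam) ^ (∑ i, m i) *
        Measure.pi (fun _ : Fin k => poissonMeasure lam.toNNReal) {m}) =
      ∏ i, ENNReal.ofReal (Real.exp δ) * ENNReal.ofReal (1 + δ / lam) ^ m i *
        poissonMeasure lam.toNNReal {m i} := by
    rw [Measure.pi_singleton, Finset.prod_mul_distrib, Finset.prod_mul_distrib, Finset.prod_const,
      Finset.card_univ, Fintype.card_fin, Finset.prod_pow_eq_pow_sum,
      ← ENNReal.ofReal_pow (Real.exp_nonneg _), ← Real.exp_nat_mul, mul_assoc]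
  rw [hprod, ← ofReal_norm, norm_prod, ENNReal.ofReal_prod_of_nonneg fun _ _ => norm_nonneg _]
  refine Finset.prod_le_prod' fun i _ => ?_
  rw [ofReal_norm]
  exact enorm_exp_neg_mul_pow_div_factorial_le hlam hz (m i)

theorem tsum_coe_pow_sum_mul_pi_poissonMeasure_singleton_ne_top (r t : ℝ≥0) {k : ℕ}
    (s : Set (Fin k → ℕ)) :
    ∑' m : s, (t : ℝ≥0∞) ^ (∑ i, m.1 i) *
      Measure.pi (fun _ : Fin k => poissonMeasure r) {m.1} ≠ ⊤ := by
  set ν := Measure.pi fun _ : Fin k => poissonMeasure (t * r)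
  have htilt : ∀ m : Fin k → ℕ, (t : ℝ≥0∞) ^ (∑ i, m i) *
      Measure.pi (fun _ : Fin k => poissonMeasure r) {m} =
        ENNReal.ofReal (Real.exp (r * (t - 1))) ^ k * ν {m} := by
    intro m
    simp only [ν, Measure.pi_singleton, ← Finset.prod_pow_eq_pow_sum, ← Finset.prod_mul_distrib,
      coe_pow_mul_poissonMeasure_singleton]
    rw [Finset.prod_mul_distrib, Finset.prod_const, Finset.card_univ, Fintype.card_fin]
  have hsum : ∑' m : s, ν {m.1} = ν s := by
    simpa using (lintegral_countable (μ := ν) (fun _ => 1) s.to_countable).symm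
  simp_rw [htilt, ENNReal.tsum_mul_left, hsum]
  exact ENNReal.mul_ne_top (ENNReal.pow_ne_top ENNReal.ofReal_ne_top) (measure_ne_top ν s)

theorem IsPoissonSeedFamily.measure_preimage_restrictSeed {P : ℝ → Measure (ℕ → ℕ)}
    (hP : IsPoissonSeedFamily P) {lam : ℝ} (hlam : 0 < lam) (k : ℕ) (B : Set (Fin k → ℕ)) :
    P lam (restrictSeed k ⁻¹' B) =
      Measure.pi (fun _ : Fin k => poissonMeasure lam.toNNReal) B := by
  rw [← (hP lam hlam).2 k,
    Measure.map_apply (measurable_pi_lambda _ fun j => measurable_pi_apply j.1)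
      B.to_countable.measurableSet]
  rfl

theorem restrictSeed_mem_inter_sum_eq (k : ℕ) (M : Set (Fin k → ℕ)) (ℓ : ℕ) :
    {ω | restrictSeed k ω ∈ M} ∩ {ω | ∑ i ∈ Finset.range k, ω i = ℓ} =
      restrictSeed k ⁻¹' (M ∩ (fun m => ∑ i, m i) ⁻¹' {ℓ}) := by
  ext ω
  simp [restrictSeed, Fin.sum_univ_eq_sum_range (fun i => ω i) k]

/-- Bound on the entire extension `g(z) = Σ_{m ∈ M} Π_i e^{-z} z^{m_i}/m_i!` of
`λ ↦ P_λ(Γ)`, `Γ = {ω : (ω₁,…,ω_k) ∈ M}`: for `λ > 0`, `0 < δ < λ` and `|z - λ| ≤ δ`,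
`|g(z)| ≤ e^{kδ} Σ_ℓ (1 + δ/λ)^ℓ P_λ(Γ ∩ {ω₁+⋯+ω_k = ℓ})`. -/
theorem entire_extension_bound
    (P : ℝ → Measure (ℕ → ℕ)) (hP : IsPoissonSeedFamily P)
    (k : ℕ) (M : Set (Fin k → ℕ))
    (g : ℂ → ℂ)
    (hg : ∀ z : ℂ, g z = ∑' m : M, ∏ i : Fin k,
      Complex.exp (-z) * z ^ (m.1 i) / ((m.1 i).factorial : ℂ)) :
    ∀ lam : ℝ, 0 < lam → ∀ δ : ℝ, 0 < δ → δ < lam →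
      ∀ z : ℂ, ‖z - (lam : ℂ)‖ ≤ δ →
        ‖g z‖ ≤ Real.exp (k * δ) *
          ∑' ℓ : ℕ, (1 + δ / lam) ^ ℓ *
            (P lam ({ω | restrictSeed k ω ∈ M} ∩
              {ω | ∑ i ∈ Finset.range k, ω i = ℓ})).toReal := by
  intro lam hlam δ hδ _ z hz
  have := (hP lam hlam).1
  set ν := Measure.pi fun _ : Fin k => poissonMeasure lam.toNNReal
  set C := ENNReal.ofReal (1 + δ / lam)
  set X := ∑' m : M, C ^ (∑ i, m.1 i) * ν {m.1}
  have hX : X = ∑' ℓ : ℕ, C ^ ℓ * P lam ({ω | restrictSeed k ω ∈ M} ∩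
      {ω | ∑ i ∈ Finset.range k, ω i = ℓ}) := by
    simp_rw [X, tsum_comp_mul_measure_singleton_eq_tsum_fiber ν M (fun m => ∑ i, m i) (C ^ ·),
      restrictSeed_mem_inter_sum_eq, hP.measure_preimage_restrictSeed hlam, ν]
  have hbound : ‖g z‖ₑ ≤ ENNReal.ofReal (Real.exp (k * δ)) * X := by
    rw [hg, ← ENNReal.tsum_mul_left]
    exact enorm_tsum_le_tsum_enorm.trans
      (ENNReal.tsum_le_tsum fun m => enorm_prod_exp_neg_mul_pow_div_factorial_le hlam hz m.1)
  have hX_ne_top : X ≠ ⊤ := tsum_coe_pow_sum_mul_pi_poissonMeasure_singleton_ne_top _ _ M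
  calc ‖g z‖ = ‖g z‖ₑ.toReal := (toReal_enorm _).symm
    _ ≤ (ENNReal.ofReal (Real.exp (k * δ)) * X).toReal :=
      ENNReal.toReal_mono (ENNReal.mul_ne_top ENNReal.ofReal_ne_top hX_ne_top) hbound
    _ = _ := by
      rw [ENNReal.toReal_mul, hX, ENNReal.tsum_toReal_eq fun ℓ => ENNReal.mul_ne_top
        (ENNReal.pow_ne_top ENNReal.ofReal_ne_top) (measure_ne_top _ _),
        ENNReal.toReal_ofReal (Real.exp_nonneg _)]
      simp only [ENNReal.toReal_mul, ENNReal.toReal_pow,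
        ENNReal.toReal_ofReal (by positivity : 0 ≤ 1 + δ / lam)]
end

section
/- Let F ⊆ ℕ be an arbitrary set of levels. Let A = {ω ∈ ℕ^ℕ : there exists i ≥ 1 such that the tree encoded by ω has at least i vertices, node i lies on an even level, and ω_i = 1}, and let B = {ω ∈ ℕ^ℕ : there exists i ≥ 1 such that the tree encoded by ω has at least i vertices, the level of node i belongs to F, and ω_i = 2}. Then A ∪ B is rapidly determined over the interval (λ₀, λ₁) for every 0 ≤ λ₀ < λ₁ ≤ ∞. -/
open MeasureTheory ProbabilityTheory Filter Topology

/-- The tree encoded by the seed `ω` in breadth-first order (node `i+1` has `ω i`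
children) has at least `k` vertices: `ω₁ + ⋯ + ω_j ≥ j` for every `1 ≤ j ≤ k - 1`. -/
def treeAtLeast (ω : ℕ → ℕ) (k : ℕ) : Prop :=
  ∀ j : ℕ, 1 ≤ j → j ≤ k - 1 → j ≤ ∑ i ∈ Finset.range j, ω i

/-- The 0-based index of the parent of the node of 0-based index `i` (for `i ≥ 1`):
the least `p` such that `ω₁ + ⋯ + ω_{p+1} ≥ i`. -/
noncomputable def parent (ω : ℕ → ℕ) (i : ℕ) : ℕ :=
  sInf {p : ℕ | i ≤ ∑ t ∈ Finset.range (p + 1), ω t}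

/-- The level of the node of 0-based index `i`: the root (index `0`) has level `0`,
and the level of any other node is one plus the level of its parent. -/
noncomputable def level (ω : ℕ → ℕ) (i : ℕ) : ℕ :=
  if h : parent ω i < i then level ω (parent ω i) + 1 else 0
termination_by i
decreasing_by exact h

/-!
Let `Aₖ` be the event that one of the first `k` nodes is a witness for `A ∪ B`. Then
`(A ∪ B) \ Aₖ` forces the tree to have more than `k` nodes while no even-level node among the
first `k` has exactly one child. Every odd-level node is a child of an even-level one, so on this
event `∑ (ωᵢ + 1) ≥ k` over the even-level nodes `i < k`, where moreover `ωᵢ ≠ 1`.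

Tilt: give an even-level node the weight `t ^ (ωᵢ + 1)`, or `0` if `ωᵢ = 1`. Whether node `i` is
on an even level is decided by `ω₀, …, ω_{i-1}`, so the expected product of the weights is at most
`max 1 m ^ k`, with `m` the Poisson mean of one weight; by Markov it bounds `t ^ k` times the
probability of the bad event. Here `m / t = e^{λ(t-1)} - t λ e^{-λ}`, which is `1 - λ e^{-λ} < 1`
at `t = 1`, so some `t > 1` gives the rate `ρ = max (1/t) (m/t) < 1`.
-/

open Finset Real
open scoped ENNReal NNReal

section Tree

variable {ω ω' : ℕ → ℕ} {i k : ℕ}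

theorem restrictSeed_eq_iff : restrictSeed k ω = restrictSeed k ω' ↔ ∀ j < k, ω j = ω' j := by
  simp [restrictSeed, funext_iff, Fin.forall_iff]

theorem treeAtLeast.mono (h : treeAtLeast ω k) (hik : i ≤ k) : treeAtLeast ω i :=
  fun j hj hji => h j hj (by omega)

theorem treeAtLeast.le_sum_range (h : treeAtLeast ω (i + 1)) (hi : 0 < i) :
    i ≤ ∑ t ∈ range i, ω t :=
  h i hi (by omega)

theorem sum_range_eq_of_agree (h : ∀ j < i, ω j = ω' j) {j : ℕ} (hj : j ≤ i) :
    ∑ t ∈ range j, ω t = ∑ t ∈ range j, ω' t :=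
  sum_congr rfl fun t ht => h t (by rw [mem_range] at ht; omega)

theorem treeAtLeast.of_agree (h : treeAtLeast ω (i + 1)) (hω : ∀ j < i, ω j = ω' j) :
    treeAtLeast ω' (i + 1) := fun j hj hji => by
  rw [← sum_range_eq_of_agree hω (by omega)]
  exact h j hj hji

theorem sub_one_mem_parent_set (hi : 0 < i) (h : i ≤ ∑ t ∈ range i, ω t) :
    i - 1 ∈ {p : ℕ | i ≤ ∑ t ∈ range (p + 1), ω t} := by
  simpa [Nat.sub_add_cancel hi] using h

theorem parent_lt (hi : 0 < i) (h : i ≤ ∑ t ∈ range i, ω t) : parent ω i < i :=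
  (Nat.sInf_le (sub_one_mem_parent_set hi h)).trans_lt (Nat.sub_lt hi one_pos)

theorem le_sum_range_parent_succ (hi : 0 < i) (h : i ≤ ∑ t ∈ range i, ω t) :
    i ≤ ∑ t ∈ range (parent ω i + 1), ω t :=
  Nat.sInf_mem ⟨_, sub_one_mem_parent_set hi h⟩

theorem sum_range_parent_lt (hi : 0 < i) : ∑ t ∈ range (parent ω i), ω t < i := by
  rcases Nat.eq_zero_or_pos (parent ω i) with h | h
  · simpa [h]
  · have hnot : parent ω i - 1 ∉ {p : ℕ | i ≤ ∑ t ∈ range (p + 1), ω t} :=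
      Nat.notMem_of_lt_sInf (Nat.sub_lt h one_pos)
    rwa [Set.mem_ofPred_eq, Nat.sub_add_cancel h, not_le] at hnot

theorem parent_eq_of_agree (hi : 0 < i) (h : i ≤ ∑ t ∈ range i, ω t)
    (hω : ∀ j < i, ω j = ω' j) : parent ω i = parent ω' i := by
  have h' : i ≤ ∑ t ∈ range i, ω' t := (sum_range_eq_of_agree hω le_rfl) ▸ h
  have hsum : ∀ p < i, ∑ t ∈ range (p + 1), ω t = ∑ t ∈ range (p + 1), ω' t :=
    fun p hp => sum_range_eq_of_agree hω hp
  apply le_antisymm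
  · refine Nat.sInf_le ?_
    rw [Set.mem_ofPred_eq, hsum _ (parent_lt hi h')]
    exact le_sum_range_parent_succ hi h'
  · refine Nat.sInf_le ?_
    rw [Set.mem_ofPred_eq, ← hsum _ (parent_lt hi h)]
    exact le_sum_range_parent_succ hi h

theorem level_zero : level ω 0 = 0 := by
  rw [level]
  simp

theorem level_of_parent_lt (h : parent ω i < i) : level ω i = level ω (parent ω i) + 1 := by
  rw [level, dif_pos h]

theorem level_eq_of_agree (hT : treeAtLeast ω (i + 1)) (hω : ∀ j < i, ω j = ω' j) :
    level ω i = level ω' i := by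
  induction i using Nat.strong_induction_on with
  | _ i ih =>
    rcases Nat.eq_zero_or_pos i with rfl | hi
    · rw [level_zero, level_zero]
    have hsum := hT.le_sum_range hi
    have hpar := parent_eq_of_agree hi hsum hω
    have hlt := parent_lt hi hsum
    have hlt' : parent ω' i < i := hpar ▸ hlt
    rw [level_of_parent_lt hlt, level_of_parent_lt hlt', ← hpar,
      ih _ hlt (hT.mono (by omega)) fun j hj => hω j (hj.trans hlt)]

/-- Every node of odd level is a child of a node of even level, so the first `k` nodes are
covered by the even-level ones among them together with their children. -/
theorem le_sum_succ_filter_even_level (h : treeAtLeast ω (k + 1)) :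
    k ≤ ∑ i ∈ (range k).filter (fun i => Even (level ω i)), (ω i + 1) := by
  set S := (range k).filter fun i => Even (level ω i)
  set O := (range k).filter fun i => ¬ Even (level ω i)
  have hcard : #S + #O = k := by
    rw [card_filter_add_card_filter_not, card_range]
  have hO : O ⊆ S.biUnion fun p => Ioc (∑ t ∈ range p, ω t) (∑ t ∈ range (p + 1), ω t) := by
    intro i hi
    simp only [O, mem_filter, mem_range] at hi
    obtain ⟨hik, hodd⟩ := hi
    have hi0 : 0 < i := Nat.pos_of_ne_zero fun h0 => hodd (by simp [h0, level_zero])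
    have hsum := (h.mono (by omega : i + 1 ≤ k + 1)).le_sum_range hi0
    have hlt := parent_lt hi0 hsum
    refine mem_biUnion.2 ⟨parent ω i, ?_, ?_⟩
    · simp only [S, mem_filter, mem_range]
      refine ⟨hlt.trans hik, ?_⟩
      rw [level_of_parent_lt hlt, Nat.even_add_one, not_not] at hodd
      exact hodd
    · exact mem_Ioc.2 ⟨sum_range_parent_lt hi0, le_sum_range_parent_succ hi0 hsum⟩
  have hOS : #O ≤ ∑ p ∈ S, ω p := by
    refine (card_le_card hO).trans (card_biUnion_le.trans (sum_le_sum fun p _ => ?_))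
    rw [Nat.card_Ioc, sum_range_succ]
    omega
  rw [sum_add_distrib, sum_const, smul_eq_mul, mul_one]
  omega

end Tree

section AdaptedProduct

variable {α : Type*}

theorem Fin.take_snoc_of_le {k : ℕ} (x : Fin k → α) (a : α) {m : ℕ} (h : m ≤ k) :
    Fin.take m (h.trans k.le_succ) (Fin.snoc (α := fun _ => α) x a) = Fin.take m h x := by
  rw [← Fin.take_take h k.le_succ, Fin.take_eq_init, Fin.init_snoc]

open scoped Classical in
noncomputable def adaptedProduct (p : ∀ i : ℕ, (Fin i → α) → Prop) (G : α → ℝ≥0∞) {k : ℕ}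
    (x : Fin k → α) : ℝ≥0∞ :=
  ∏ i : Fin k, if p i (Fin.take i i.2.le x) then G (x i) else 1

open scoped Classical in
theorem adaptedProduct_snoc (p : ∀ i : ℕ, (Fin i → α) → Prop) (G : α → ℝ≥0∞) {k : ℕ}
    (x : Fin k → α) (a : α) :
    adaptedProduct p G (Fin.snoc (α := fun _ => α) x a) =
      adaptedProduct p G x * if p k x then G a else 1 := by
  unfold adaptedProduct
  rw [Fin.prod_univ_castSucc]
  congr 1
  · refine Finset.prod_congr rfl fun i _ => ?_
    simp only [Fin.val_castSucc, Fin.take_snoc_of_le x a i.2.le, Fin.snoc_castSucc]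
  · simp only [Fin.val_last, Fin.take_snoc_of_le x a le_rfl, Fin.take_eq_self, Fin.snoc_last]

open scoped Classical in
theorem lintegral_adaptedProduct_le [MeasurableSpace α] [Countable α]
    [MeasurableSingletonClass α] (μ : Measure α) [IsProbabilityMeasure μ]
    (p : ∀ i : ℕ, (Fin i → α) → Prop) (G : α → ℝ≥0∞) {M : ℝ≥0∞} (hM : 1 ≤ M)
    (hG : ∫⁻ a, G a ∂μ ≤ M) (k : ℕ) :
    ∫⁻ x, adaptedProduct p G x ∂Measure.pi (fun _ : Fin k => μ) ≤ M ^ k := by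
  induction k with
  | zero => simp [adaptedProduct]
  | succ k ih =>
    have hsplit :=
      (measurePreserving_piFinSuccAbove (fun _ : Fin (k + 1) => μ) (Fin.last k)).symm
    have hstep : ∀ x : Fin k → α, ∫⁻ a, (if p k x then G a else 1) ∂μ ≤ M := fun x => by
      split_ifs
      · exact hG
      · simpa using hM
    calc ∫⁻ x, adaptedProduct p G x ∂Measure.pi (fun _ : Fin (k + 1) => μ)
        = ∫⁻ z : α × (Fin k → α), adaptedProduct p G z.2 * (if p k z.2 then G z.1 else 1)
            ∂μ.prod (Measure.pi fun _ : Fin k => μ) := by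
          rw [← hsplit.lintegral_comp (measurable_of_countable _)]
          refine lintegral_congr fun z => ?_
          simp only [MeasurableEquiv.piFinSuccAbove_symm_apply, Fin.insertNthEquiv_last]
          exact adaptedProduct_snoc p G z.2 z.1
      _ = ∫⁻ x, ∫⁻ a, adaptedProduct p G x * (if p k x then G a else 1) ∂μ
            ∂Measure.pi fun _ : Fin k => μ :=
          lintegral_prod_symm _ (measurable_of_countable _).aemeasurable
      _ ≤ ∫⁻ x, adaptedProduct p G x * M ∂Measure.pi fun _ : Fin k => μ := by
          gcongr with x
          rw [lintegral_const_mul _ (measurable_of_countable _)]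
          gcongr
          exact hstep x
      _ ≤ M ^ (k + 1) := by
          rw [lintegral_mul_const _ (measurable_of_countable _), pow_succ]
          gcongr

end AdaptedProduct

section Poisson

noncomputable def tiltWeight (t : ℝ≥0∞) (n : ℕ) : ℝ≥0∞ :=
  if n = 1 then 0 else t ^ (n + 1)

theorem hasSum_pow_mul_poisson (r : ℝ≥0) (s : ℝ) :
    HasSum (fun n : ℕ => s ^ n * (exp (-r) * r ^ n / n.factorial)) (exp (r * (s - 1))) := by
  have h := (NormedSpace.expSeries_div_hasSum_exp (s * r : ℝ)).mul_left (exp (-r))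
  rw [← exp_eq_exp_ℝ, ← exp_add, show -(r : ℝ) + s * r = r * (s - 1) by ring] at h
  exact h.congr_fun fun n => by rw [mul_pow]; ring

theorem lintegral_tiltWeight_poissonMeasure (r : ℝ≥0) {t : ℝ} (ht : 0 ≤ t) :
    ∫⁻ n, tiltWeight (ENNReal.ofReal t) n ∂poissonMeasure r =
      ENNReal.ofReal (t * (exp (r * (t - 1)) - t * (r * exp (-r)))) := by
  set f : ℕ → ℝ := fun n => if n = 1 then 0 else t ^ (n + 1) * (exp (-r) * r ^ n / n.factorial)
  have hsum : HasSum f (t * (exp (r * (t - 1)) - t * (r * exp (-r)))) := by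
    have h := ((hasSum_pow_mul_poisson r t).mul_left t).sub
      (hasSum_ite_eq 1 (t ^ 2 * (r * exp (-r))))
    rw [show t * exp (r * (t - 1)) - t ^ 2 * (r * exp (-r)) =
      t * (exp (r * (t - 1)) - t * (r * exp (-r))) by ring] at h
    refine h.congr_fun fun n => ?_
    rcases eq_or_ne n 1 with rfl | hn
    · simp only [↓reduceIte, pow_one, Nat.factorial_one, Nat.cast_one, div_one, f]
      ring
    · simp only [hn, ↓reduceIte, sub_zero, f]
      ring
  have hf : ∀ n, 0 ≤ f n := fun n => by
    simp only [f]
    split_ifs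
    exacts [le_rfl, by positivity]
  rw [lintegral_countable', ← hsum.tsum_eq, ENNReal.ofReal_tsum_of_nonneg hf hsum.summable]
  refine tsum_congr fun n => ?_
  rw [poissonMeasure_singleton, tiltWeight]
  simp only [f]
  split_ifs
  · simp
  · rw [← ENNReal.ofReal_pow ht, ← ENNReal.ofReal_mul (pow_nonneg ht _)]

/-- The quantity below is the Poisson mean of `tiltWeight t` divided by `t`. -/
theorem exists_one_lt_tilt {r : ℝ≥0} (hr : 0 < r) :
    ∃ t : ℝ, 1 < t ∧ exp (r * (t - 1)) - t * (r * exp (-r)) < 1 := by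
  have hcont : Continuous fun t : ℝ => exp (r * (t - 1)) - t * (r * exp (-r)) := by fun_prop
  have hone : exp (r * (1 - 1)) - 1 * (r * exp (-r)) < 1 := by
    have : 0 < (r : ℝ) * exp (-r) := mul_pos hr (exp_pos _)
    simp only [sub_self, mul_zero, exp_zero, one_mul]
    linarith
  have hev := (hcont.continuousAt.eventually (gt_mem_nhds hone)).filter_mono
    (nhdsWithin_le_nhds (s := Set.Ioi 1))
  obtain ⟨t, ht, h1⟩ := (hev.and self_mem_nhdsWithin).exists
  exact ⟨t, h1, ht⟩

end Poisson

section NodeEvents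

variable {ω : ℕ → ℕ} {i k : ℕ} {Q : ℕ → ℕ → Prop}

/-- Whether node `i` exists and lies on an even level depends only on `ω₀, …, ω_{i-1}`
(`level_eq_of_agree`); this is that property read off the prefix. -/
def EvenLevelPrefix (i : ℕ) (y : Fin i → ℕ) : Prop :=
  ∃ ω, restrictSeed i ω = y ∧ treeAtLeast ω (i + 1) ∧ Even (level ω i)

theorem evenLevelPrefix_restrictSeed_iff (hT : treeAtLeast ω (i + 1)) :
    EvenLevelPrefix i (restrictSeed i ω) ↔ Even (level ω i) := by
  refine ⟨fun ⟨ω', hω', hT', heven⟩ => ?_, fun h => ⟨ω, rfl, hT, h⟩⟩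
  rwa [level_eq_of_agree hT' (restrictSeed_eq_iff.1 hω')] at heven

def nodeEvent (Q : ℕ → ℕ → Prop) : Set (ℕ → ℕ) :=
  {ω | ∃ i, treeAtLeast ω (i + 1) ∧ Q (level ω i) (ω i)}

def nodeEventBefore (Q : ℕ → ℕ → Prop) (k : ℕ) : Set (ℕ → ℕ) :=
  {ω | ∃ i < k, treeAtLeast ω (i + 1) ∧ Q (level ω i) (ω i)}

def badSeeds (k : ℕ) : Set (ℕ → ℕ) :=
  {ω | treeAtLeast ω (k + 1) ∧ ∀ i < k, Even (level ω i) → ω i ≠ 1}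

theorem tautDetermined_of_agree {A : Set (ℕ → ℕ)}
    (hA : ∀ ω ω', (∀ j < k, ω j = ω' j) → ω ∈ A → ω' ∈ A) : TautDetermined k A :=
  ⟨restrictSeed k '' A, Set.ext fun ω =>
    ⟨fun h => ⟨ω, h, rfl⟩, fun ⟨ω', h', hres⟩ => hA ω' ω (restrictSeed_eq_iff.1 hres) h'⟩⟩

theorem tautDetermined_nodeEventBefore (Q : ℕ → ℕ → Prop) (k : ℕ) :
    TautDetermined k (nodeEventBefore Q k) :=
  tautDetermined_of_agree fun ω ω' hω ⟨i, hik, hT, hQ⟩ => by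
    have hωi : ∀ j < i, ω j = ω' j := fun j hj => hω j (hj.trans hik)
    refine ⟨i, hik, hT.of_agree hωi, ?_⟩
    rwa [← level_eq_of_agree hT hωi, ← hω i hik]

theorem nodeEventBefore_subset : nodeEventBefore Q k ⊆ nodeEvent Q :=
  fun _ ⟨i, _, h⟩ => ⟨i, h⟩

theorem nodeEvent_diff_subset_badSeeds (hQ : ∀ l, Even l → Q l 1) :
    nodeEvent Q \ nodeEventBefore Q k ⊆ badSeeds k := by
  rintro ω ⟨⟨i, hT, hi⟩, hnot⟩
  have hki : k ≤ i := not_lt.1 fun hik => hnot ⟨i, hik, hT, hi⟩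
  exact ⟨hT.mono (by omega), fun j hjk heven hone =>
    hnot ⟨j, hjk, hT.mono (by omega), hone ▸ hQ _ heven⟩⟩

open scoped Classical in
theorem pow_le_adaptedProduct_of_mem_badSeeds {t : ℝ≥0∞} (ht : 1 ≤ t) (hω : ω ∈ badSeeds k) :
    t ^ k ≤ adaptedProduct EvenLevelPrefix (tiltWeight t) (restrictSeed k ω) := by
  obtain ⟨hT, hbad⟩ := hω
  have hfactor : ∀ i : Fin k,
      (if EvenLevelPrefix i (Fin.take i i.2.le (restrictSeed k ω)) then
        tiltWeight t (restrictSeed k ω i) else 1) =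
      if Even (level ω i) then t ^ (ω i + 1) else 1 := fun i => by
    rw [show Fin.take i i.2.le (restrictSeed k ω) = restrictSeed i ω from rfl,
      evenLevelPrefix_restrictSeed_iff (hT.mono (by omega))]
    split_ifs with h
    · exact if_neg (hbad i i.2 h)
    · rfl
  rw [adaptedProduct, Fintype.prod_congr _ _ hfactor,
    Fin.prod_univ_eq_prod_range (fun i => if Even (level ω i) then t ^ (ω i + 1) else 1),
    ← prod_filter, prod_pow_eq_pow_sum]
  exact pow_le_pow_right₀ ht (le_sum_succ_filter_even_level hT)

theorem exists_pi_poissonMeasure_image_badSeeds_le {r : ℝ≥0} (hr : 0 < r) :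
    ∃ ρ : ℝ, 0 < ρ ∧ ρ < 1 ∧ ∀ k, Measure.pi (fun _ : Fin k => poissonMeasure r)
      (restrictSeed k '' badSeeds k) ≤ ENNReal.ofReal (ρ ^ k) := by
  obtain ⟨t, ht1, htilt⟩ := exists_one_lt_tilt hr
  have ht0 : 0 < t := by linarith
  set ρ := max t⁻¹ (exp (r * (t - 1)) - t * (r * exp (-r)))
  have hρ0 : 0 < ρ := lt_max_of_lt_left (inv_pos.2 ht0)
  refine ⟨ρ, hρ0, max_lt (inv_lt_one_of_one_lt₀ ht1) htilt, fun k => ?_⟩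
  have hM1 : 1 ≤ ENNReal.ofReal (t * ρ) := by
    rw [← ENNReal.ofReal_one, ← mul_inv_cancel₀ ht0.ne']
    exact ENNReal.ofReal_le_ofReal (mul_le_mul_of_nonneg_left (le_max_left _ _) ht0.le)
  have hMG : ∫⁻ n, tiltWeight (ENNReal.ofReal t) n ∂poissonMeasure r ≤ ENNReal.ofReal (t * ρ) := by
    rw [lintegral_tiltWeight_poissonMeasure r ht0.le]
    exact ENNReal.ofReal_le_ofReal (mul_le_mul_of_nonneg_left (le_max_right _ _) ht0.le)
  have hmarkov : ENNReal.ofReal t ^ k * Measure.pi (fun _ : Fin k => poissonMeasure r)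
      (restrictSeed k '' badSeeds k) ≤ ENNReal.ofReal (t * ρ) ^ k := by
    calc _ ≤ ENNReal.ofReal t ^ k * Measure.pi (fun _ : Fin k => poissonMeasure r)
          {x | ENNReal.ofReal t ^ k ≤
            adaptedProduct EvenLevelPrefix (tiltWeight (ENNReal.ofReal t)) x} := by
          gcongr
          rintro _ ⟨ω, hω, rfl⟩
          exact pow_le_adaptedProduct_of_mem_badSeeds (by simpa using ht1.le) hω
      _ ≤ ∫⁻ x, adaptedProduct EvenLevelPrefix (tiltWeight (ENNReal.ofReal t)) x
            ∂Measure.pi (fun _ : Fin k => poissonMeasure r) :=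
          mul_meas_ge_le_lintegral₀ (measurable_of_countable _).aemeasurable _
      _ ≤ _ := lintegral_adaptedProduct_le _ _ _ hM1 hMG k
  rw [ENNReal.ofReal_mul ht0.le, mul_pow, ENNReal.mul_le_mul_iff_right (by positivity)
    (by finiteness)] at hmarkov
  rwa [ENNReal.ofReal_pow hρ0.le]

theorem measure_le_of_map_restrictSeed_eq {μ : Measure (ℕ → ℕ)} {ν : Measure (Fin k → ℕ)}
    (h : μ.map (restrictSeed k) = ν) (S : Set (ℕ → ℕ)) : μ S ≤ ν (restrictSeed k '' S) := by
  rw [← h, Measure.map_apply (measurable_pi_lambda (restrictSeed k) fun _ => measurable_pi_apply _)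
    (Set.to_countable _).measurableSet]
  exact measure_mono (Set.subset_preimage_image _ _)

end NodeEvents

theorem even_or_Flevel_rapidly_determined_general
    (P : ℝ → Measure (ℕ → ℕ)) (hP : IsPoissonSeedFamily P)
    (F : Set ℕ)
    (A B : Set (ℕ → ℕ))
    (hAdef : A = {ω | ∃ i : ℕ, treeAtLeast ω (i + 1) ∧ Even (level ω i) ∧ ω i = 1})
    (hBdef : B = {ω | ∃ i : ℕ, treeAtLeast ω (i + 1) ∧ level ω i ∈ F ∧ ω i = 2})
    (lam0 lam1 : EReal) (h0 : 0 ≤ lam0) :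
    ∀ lam : ℝ, lam0 < (lam : EReal) → (lam : EReal) < lam1 →
      ∃ C > (0 : ℝ), ∃ c > (0 : ℝ), ∃ k₀ : ℕ, ∃ Ak : ℕ → Set (ℕ → ℕ),
        ∀ k ≥ k₀, TautDetermined k (Ak k) ∧
          P lam (symmDiff (A ∪ B) (Ak k)) ≤ ENNReal.ofReal (C * Real.exp (-c * k)) := by
  intro lam hl0 _
  have hlam : 0 < lam := EReal.coe_pos.1 (h0.trans_lt hl0)
  set Q : ℕ → ℕ → Prop := fun l n => Even l ∧ n = 1 ∨ l ∈ F ∧ n = 2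
  have hAB : A ∪ B = nodeEvent Q := by
    subst hAdef hBdef
    ext ω
    simp only [nodeEvent, Q, Set.mem_union, Set.mem_ofPred_eq, and_or_left, exists_or]
  obtain ⟨ρ, hρ0, hρ1, hbad⟩ :=
    exists_pi_poissonMeasure_image_badSeeds_le (Real.toNNReal_pos.2 hlam)
  refine ⟨1, one_pos, -log ρ, neg_pos.2 (log_neg hρ0 hρ1), 0, nodeEventBefore Q,
    fun k _ => ⟨tautDetermined_nodeEventBefore Q k, ?_⟩⟩
  rw [hAB, symmDiff_of_ge nodeEventBefore_subset]
  calc P lam (nodeEvent Q \ nodeEventBefore Q k) ≤ P lam (badSeeds k) :=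
        measure_mono (nodeEvent_diff_subset_badSeeds fun _ hl => Or.inl ⟨hl, rfl⟩)
    _ ≤ _ := measure_le_of_map_restrictSeed_eq ((hP lam hlam).2 k) _
    _ ≤ ENNReal.ofReal (ρ ^ k) := hbad k
    _ = _ := by rw [one_mul, neg_neg, mul_comm, exp_nat_mul, exp_log hρ0]

/-- Let `F ⊆ ℕ` be an arbitrary set of levels, `A` the event that some node on an even
level has exactly one child, and `B` the event that some node on an `F`-level has exactly
two children.  Then `A ∪ B` is rapidly determined over `(λ₀, λ₁)` for every
`0 ≤ λ₀ < λ₁ ≤ ∞`. -/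
theorem even_or_Flevel_rapidly_determined
    (P : ℝ → Measure (ℕ → ℕ)) (hP : IsPoissonSeedFamily P)
    (F : Set ℕ)
    (A B : Set (ℕ → ℕ))
    (hAdef : A = {ω | ∃ i : ℕ, treeAtLeast ω (i + 1) ∧ Even (level ω i) ∧ ω i = 1})
    (hBdef : B = {ω | ∃ i : ℕ, treeAtLeast ω (i + 1) ∧ level ω i ∈ F ∧ ω i = 2})
    (lam0 lam1 : EReal) (h0 : 0 ≤ lam0) (h01 : lam0 < lam1) :
    ∀ lam : ℝ, lam0 < (lam : EReal) → (lam : EReal) < lam1 →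
      ∃ C > (0 : ℝ), ∃ c > (0 : ℝ), ∃ k₀ : ℕ, ∃ Ak : ℕ → Set (ℕ → ℕ),
        ∀ k ≥ k₀, TautDetermined k (Ak k) ∧
          P lam (symmDiff (A ∪ B) (Ak k)) ≤ ENNReal.ofReal (C * Real.exp (-c * k)) :=
  even_or_Flevel_rapidly_determined_general P hP F A B hAdef hBdef lam0 lam1 h0
end

section
/- Let F ⊆ ℕ be an arbitrary set of levels. Let A = {ω ∈ ℕ^ℕ : there exists i ≥ 1 such that the tree encoded by ω has at least i vertices, node i lies on an even level, and ω_i = 1}, and let B = {ω ∈ ℕ^ℕ : there exists i ≥ 1 such that the tree encoded by ω has at least i vertices, the level of node i belongs to F, and ω_i = 2}. Then the function λ ↦ P_λ(A ∪ B) is real analytic on (0, ∞); in particular (taking F = ∅), λ ↦ P_λ(A) is real analytic on (0, ∞). -/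
open MeasureTheory ProbabilityTheory Filter Topology

/-!
Both events say that some node carries a forbidden pair (level, number of children), where an
even-level node with exactly one child is always forbidden. Let `C` be the complement, in which
every node is allowed. Up to a null set, `C` is the disjoint union of the events `C_n` that
moreover the tree has exactly `n + 1` nodes. `C_n` is determined by `ω₁, …, ω_{n+1}`, whose sum
is `n`, so `P_λ(C_n) = e^{-λ(n+1)} λ^n a_n` with `a_n = ∑ ∏_t 1/ω_t!` over the admissible seeds.
Hence `P_λ(C) = e^{-λ} h(λ e^{-λ})` with `h(w) = ∑ a_n w^n`, and since `λ e^{-λ} ≤ e^{-1}` it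
suffices that `a_n ≤ ρ^{n+1}` for some `ρ < e` (without the constraint, `a_n = (n+1)^n/(n+1)!`
grows exactly like `e^n`).

This bound, and the fact that `C` meets the event of an infinite tree in a null set, come from one
tilting argument: give a node the weight `y^{ω_t}` if its level is even and `y⁻¹` if it is odd.
Every odd-level node is a child of an even-level node, so the total weight of a seed is at
least `1`. Summing node by node in breadth-first order, the weighted sum over the first `n`
nodes is at most `c^n`, where `c` bounds both `∑_{d ≠ 1} μ^d y^d / d! = e^{μy} - μy` and
`e^μ / y`; excluding `d = 1` is what allows `c < e^μ` for `y` slightly above `1`.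
-/

namespace SeedTree

open Finset
open scoped ENNReal Classical

theorem treeAtLeast_mono {ω : ℕ → ℕ} {k m : ℕ} (hkm : k ≤ m) (h : treeAtLeast ω m) :
    treeAtLeast ω k :=
  fun j hj hjk => h j hj (hjk.trans (Nat.sub_le_sub_right hkm 1))

theorem treeAtLeast_zero (ω : ℕ → ℕ) : treeAtLeast ω 0 :=
  fun _ hj hj0 => absurd hj (by omega)

theorem treeAtLeast_one (ω : ℕ → ℕ) : treeAtLeast ω 1 :=
  fun _ hj hj1 => absurd hj (by omega)

theorem treeAtLeast_succ_iff {ω : ℕ → ℕ} {k : ℕ} :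
    treeAtLeast ω (k + 1) ↔ treeAtLeast ω k ∧ k ≤ ∑ t ∈ range k, ω t := by
  refine ⟨fun h => ⟨treeAtLeast_mono k.le_succ h, ?_⟩, fun ⟨h, hk⟩ j hj hjk => ?_⟩
  · rcases k.eq_zero_or_pos with rfl | hk
    · simp
    · exact h k hk (by omega)
  · rcases (show j ≤ k by omega).lt_or_eq with hjk | rfl
    · exact h j hj (by omega)
    · exact hk

theorem sum_range_succ_eq_iff_not_treeAtLeast {ω : ℕ → ℕ} {n : ℕ}
    (hω : treeAtLeast ω (n + 1)) :
    ∑ t ∈ range (n + 1), ω t = n ↔ ¬treeAtLeast ω (n + 2) := by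
  have hn : n ≤ ∑ t ∈ range (n + 1), ω t :=
    (treeAtLeast_succ_iff.1 hω).2.trans (sum_le_sum_of_subset (range_subset_range.2 n.le_succ))
  rw [treeAtLeast_succ_iff (k := n + 1)]
  simp only [hω, true_and, not_le]
  omega

theorem dependsOn_treeAtLeast (k : ℕ) :
    DependsOn (treeAtLeast · k) (Set.Iio (k - 1)) := by
  intro ω ω' h
  refine propext (forall_congr' fun _ => imp_congr_right fun _ => imp_congr_right fun hjk => ?_)
  rw [sum_congr rfl fun t ht => h t ((mem_range.1 ht).trans_le (by omega))]

theorem parent_eq {ω : ℕ → ℕ} {i j : ℕ} (hlt : ∑ t ∈ range j, ω t < i)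
    (hle : i ≤ ∑ t ∈ range (j + 1), ω t) : parent ω i = j := by
  refine le_antisymm (Nat.sInf_le hle) (le_csInf ⟨j, hle⟩ fun p hp => ?_)
  by_contra! hpj
  exact (hp.trans (sum_le_sum_of_subset (range_subset_range.2 hpj))).not_gt hlt

theorem parent_spec {ω : ℕ → ℕ} {i : ℕ} (hi : 1 ≤ i) (hsum : i ≤ ∑ t ∈ range i, ω t) :
    parent ω i < i ∧ ∑ t ∈ range (parent ω i), ω t < i ∧
      i ≤ ∑ t ∈ range (parent ω i + 1), ω t := by
  have hmem : i - 1 ∈ {p : ℕ | i ≤ ∑ t ∈ range (p + 1), ω t} := by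
    simpa [Nat.sub_add_cancel hi] using hsum
  have hspec : i ≤ ∑ t ∈ range (parent ω i + 1), ω t := Nat.sInf_mem ⟨_, hmem⟩
  refine ⟨(Nat.sInf_le hmem).trans_lt (by omega), ?_, hspec⟩
  rcases (parent ω i).eq_zero_or_pos with h0 | hpos
  · simp [h0]; omega
  · have : parent ω i - 1 ∉ {p : ℕ | i ≤ ∑ t ∈ range (p + 1), ω t} :=
      Nat.notMem_of_lt_sInf (Nat.sub_lt hpos one_pos)
    simpa [Nat.sub_add_cancel hpos] using this

theorem level_zero (ω : ℕ → ℕ) : level ω 0 = 0 := by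
  rw [level]; simp

theorem level_of_parent_lt {ω : ℕ → ℕ} {i : ℕ} (h : parent ω i < i) :
    level ω i = level ω (parent ω i) + 1 := by
  rw [level]; simp [h]

theorem level_congr {ω ω' : ℕ → ℕ} {i : ℕ} (h : ∀ t < i, ω t = ω' t)
    (hω : treeAtLeast ω (i + 1)) : level ω i = level ω' i := by
  induction i using Nat.strong_induction_on with
  | _ i ih =>
  rcases i.eq_zero_or_pos with rfl | hi
  · simp [level_zero]
  have sum_eq : ∀ m ≤ i, ∑ t ∈ range m, ω t = ∑ t ∈ range m, ω' t := fun m hm =>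
    sum_congr rfl fun t ht => h t ((mem_range.1 ht).trans_le hm)
  obtain ⟨hpi, hlt, hle⟩ := parent_spec hi (treeAtLeast_succ_iff.1 hω).2
  have hparent : parent ω' i = parent ω i := by
    rw [sum_eq _ hpi.le] at hlt
    rw [sum_eq _ hpi] at hle
    exact parent_eq hlt hle
  have hpi' : parent ω' i < i := hparent ▸ hpi
  rw [level_of_parent_lt hpi, level_of_parent_lt hpi', hparent,
    ih _ hpi (fun t ht => h t (ht.trans hpi)) (treeAtLeast_mono (by omega) hω)]

theorem card_odd_level_le {ω : ℕ → ℕ} {n : ℕ} (hω : treeAtLeast ω n) :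
    #{t ∈ range n | ¬Even (level ω t)} ≤ ∑ p ∈ range n with Even (level ω p), ω p := by
  -- the children of node `p` are the nodes `∑_{t<p} ω t + 1, …, ∑_{t≤p} ω t`
  have hsub : {t ∈ range n | ¬Even (level ω t)} ⊆ {p ∈ range n | Even (level ω p)}.biUnion
      fun p => Ioc (∑ t ∈ range p, ω t) (∑ t ∈ range p, ω t + ω p) := by
    intro t ht
    obtain ⟨htn, hodd⟩ := mem_filter.1 ht
    have ht1 : 1 ≤ t := Nat.one_le_iff_ne_zero.2 fun h0 => hodd (by simp [h0, level_zero])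
    obtain ⟨hpt, hlt, hle⟩ := parent_spec ht1 (hω t ht1 (by simp at htn; omega))
    rw [level_of_parent_lt hpt, Nat.even_add_one, not_not] at hodd
    rw [sum_range_succ] at hle
    exact mem_biUnion.2 ⟨parent ω t, mem_filter.2 ⟨by simp at htn ⊢; omega, hodd⟩,
      mem_Ioc.2 ⟨hlt, hle⟩⟩
  calc #{t ∈ range n | ¬Even (level ω t)}
      ≤ ∑ p ∈ range n with Even (level ω p),
          #(Ioc (∑ t ∈ range p, ω t) (∑ t ∈ range p, ω t + ω p)) :=
        (Finset.card_le_card hsub).trans card_biUnion_le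
    _ = ∑ p ∈ range n with Even (level ω p), ω p := by simp

def hasNodeWith (R : ℕ → ℕ → Prop) : Set (ℕ → ℕ) :=
  {ω | ∃ i, treeAtLeast ω (i + 1) ∧ R (level ω i) (ω i)}

def Avoids (R : ℕ → ℕ → Prop) (n : ℕ) (ω : ℕ → ℕ) : Prop :=
  treeAtLeast ω n ∧ ∀ t < n, ¬R (level ω t) (ω t)

def EvenUnary (l d : ℕ) : Prop := Even l ∧ d = 1

theorem Avoids.evenUnary {R : ℕ → ℕ → Prop} (hR : ∀ l, Even l → R l 1) {n : ℕ} {ω : ℕ → ℕ}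
    (h : Avoids R n ω) : Avoids EvenUnary n ω :=
  ⟨h.1, fun t ht ⟨hl, hd⟩ => h.2 t ht (hd ▸ hR _ hl)⟩

theorem avoids_and_sum_eq_iff (R : ℕ → ℕ → Prop) (n : ℕ) (ω : ℕ → ℕ) :
    Avoids R (n + 1) ω ∧ ∑ t ∈ range (n + 1), ω t = n ↔
      ω ∈ (hasNodeWith R)ᶜ ∧ treeAtLeast ω (n + 1) ∧ ¬treeAtLeast ω (n + 2) := by
  simp only [hasNodeWith, Set.mem_compl_iff, Set.mem_ofPred_eq, not_exists, not_and]
  constructor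
  · rintro ⟨⟨hT, hR⟩, hsum⟩
    have hT2 := (sum_range_succ_eq_iff_not_treeAtLeast hT).1 hsum
    refine ⟨fun i hi => ?_, hT, hT2⟩
    by_cases hin : i < n + 1
    · exact hR i hin
    · exact absurd (treeAtLeast_mono (by omega) hi) hT2
  · rintro ⟨hR, hT, hT2⟩
    exact ⟨⟨hT, fun t ht => hR t (treeAtLeast_mono (by omega) hT)⟩,
      (sum_range_succ_eq_iff_not_treeAtLeast hT).2 hT2⟩

theorem dependsOn_node (R : ℕ → ℕ → Prop) (i : ℕ) :
    DependsOn (fun ω => treeAtLeast ω (i + 1) ∧ R (level ω i) (ω i)) (Set.Iio (i + 1)) := by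
  suffices ∀ ω ω' : ℕ → ℕ, (∀ t < i + 1, ω t = ω' t) →
      treeAtLeast ω (i + 1) ∧ R (level ω i) (ω i) →
      treeAtLeast ω' (i + 1) ∧ R (level ω' i) (ω' i) from
    fun ω ω' h => propext ⟨this ω ω' h, this ω' ω fun t ht => (h t ht).symm⟩
  rintro ω ω' h ⟨hT, hR⟩
  refine ⟨(dependsOn_treeAtLeast (i + 1) fun t ht => h t (by simp at ht ⊢; omega)).mp hT, ?_⟩
  rwa [← h i i.lt_succ_self, ← level_congr (fun t ht => h t (by omega)) hT]

theorem dependsOn_avoids (R : ℕ → ℕ → Prop) (n : ℕ) : DependsOn (Avoids R n) (Set.Iio n) := by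
  suffices ∀ ω ω' : ℕ → ℕ, (∀ t < n, ω t = ω' t) → Avoids R n ω → Avoids R n ω' from
    fun ω ω' h => propext ⟨this ω ω' h, this ω' ω fun t ht => (h t ht).symm⟩
  rintro ω ω' h ⟨hT, hR⟩
  refine ⟨(dependsOn_treeAtLeast n fun t ht => h t (lt_of_lt_of_le ht (by omega))).mp hT,
    fun t ht => ?_⟩
  rw [← h t ht, ← level_congr (fun s hs => h s (hs.trans ht)) (treeAtLeast_mono ht hT)]
  exact hR t ht

theorem dependsOn_avoids_and_sum_eq (R : ℕ → ℕ → Prop) (n : ℕ) :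
    DependsOn (fun ω => Avoids R (n + 1) ω ∧ ∑ t ∈ range (n + 1), ω t = n)
      (Set.Iio (n + 1)) := fun ω ω' h => by
  dsimp only
  rw [dependsOn_avoids R (n + 1) h, sum_congr rfl fun t ht => h t (mem_range.1 ht)]

def zeroExtend {n : ℕ} (p : Fin n → ℕ) : ℕ → ℕ := fun t => if h : t < n then p ⟨t, h⟩ else 0

theorem zeroExtend_val {n : ℕ} (p : Fin n → ℕ) (i : Fin n) : zeroExtend p i = p i := by
  simp [zeroExtend]

theorem zeroExtend_restrictSeed {n t : ℕ} (ω : ℕ → ℕ) (ht : t < n) :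
    zeroExtend (restrictSeed n ω) t = ω t := by
  simp [zeroExtend, restrictSeed, ht]

theorem zeroExtend_snoc {n : ℕ} (p : Fin n → ℕ) (d : ℕ) :
    zeroExtend (Fin.snoc p d : Fin (n + 1) → ℕ) = Function.update (zeroExtend p) n d := by
  ext t
  rcases lt_trichotomy t n with h | rfl | h
  · simp [zeroExtend, h, h.ne, Nat.lt_succ_of_lt h, Fin.snoc]
  · simp [zeroExtend, Fin.snoc]
  · simp [zeroExtend, h.ne', h.not_gt, show ¬t < n + 1 by omega]

theorem tsum_pi_fin_succ {α : Type*} {n : ℕ} (G : (Fin (n + 1) → α) → ℝ≥0∞) :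
    ∑' p, G p = ∑' (p : Fin n → α) (d : α), G (Fin.snoc p d) := by
  rw [← (Fin.snocEquiv fun _ => α).tsum_eq, ENNReal.tsum_prod', ENNReal.tsum_comm]
  rfl

theorem _root_.DependsOn.setOf_eq_preimage_restrictSeed {Q : (ℕ → ℕ) → Prop} {n : ℕ}
    (hQ : DependsOn Q (Set.Iio n)) :
    {ω | Q ω} = restrictSeed n ⁻¹' {p | Q (zeroExtend p)} := by
  ext ω
  exact (hQ fun t ht => (zeroExtend_restrictSeed ω ht).symm).to_iff

theorem measurable_restrictSeed (n : ℕ) : Measurable (restrictSeed n) :=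
  measurable_pi_lambda _ fun _ => measurable_pi_apply _

theorem _root_.DependsOn.measurableSet_setOf {Q : (ℕ → ℕ) → Prop} {n : ℕ}
    (hQ : DependsOn Q (Set.Iio n)) : MeasurableSet {ω | Q ω} := by
  rw [hQ.setOf_eq_preimage_restrictSeed]
  exact measurable_restrictSeed n MeasurableSet.of_discrete

theorem measurableSet_hasNodeWith (R : ℕ → ℕ → Prop) : MeasurableSet (hasNodeWith R) := by
  rw [hasNodeWith, Set.ofPred_exists]
  exact MeasurableSet.iUnion fun i => (dependsOn_node R i).measurableSet_setOf

section NodeWeight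

open Function

noncomputable def nodeWeight (f : ℕ → ℝ≥0∞) (y : ℝ≥0∞) (ω : ℕ → ℕ) (t : ℕ) : ℝ≥0∞ :=
  if Even (level ω t) then (if ω t = 1 then 0 else f (ω t) * y ^ ω t) else f (ω t) * y⁻¹

variable (f : ℕ → ℝ≥0∞) (y : ℝ≥0∞)

theorem nodeWeight_update_of_lt {ω : ℕ → ℕ} {n t : ℕ} (d : ℕ) (hω : treeAtLeast ω (n + 1))
    (ht : t < n) : nodeWeight f y (update ω n d) t = nodeWeight f y ω t := by
  have hlevel : level ω t = level (update ω n d) t :=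
    level_congr (fun s hs => (update_of_ne (by omega) _ _).symm)
      (treeAtLeast_mono (by omega) hω)
  simp only [nodeWeight, ← hlevel, update_of_ne ht.ne]

theorem nodeWeight_update_self {ω : ℕ → ℕ} {n : ℕ} (d : ℕ) (hω : treeAtLeast ω (n + 1)) :
    nodeWeight f y (update ω n d) n =
      if Even (level ω n) then (if d = 1 then 0 else f d * y ^ d) else f d * y⁻¹ := by
  have hlevel : level ω n = level (update ω n d) n :=
    level_congr (fun s hs => (update_of_ne hs.ne _ _).symm) hω
  simp only [nodeWeight, ← hlevel, update_self]

theorem tsum_prod_nodeWeight_le {c : ℝ≥0∞}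
    (heven : ∑' d, (if d = 1 then 0 else f d * y ^ d) ≤ c) (hodd : ∑' d, f d * y⁻¹ ≤ c)
    (n : ℕ) :
    ∑' p : Fin n → ℕ, (if treeAtLeast (zeroExtend p) n
      then ∏ t ∈ range n, nodeWeight f y (zeroExtend p) t else 0) ≤ c ^ n := by
  induction n with
  | zero => simp [tsum_fintype, treeAtLeast_zero]
  | succ n ih =>
  rw [tsum_pi_fin_succ, pow_succ]
  refine (ENNReal.tsum_le_tsum fun s => ?_).trans
    (ENNReal.tsum_mul_right.trans_le (mul_le_mul_left ih c))
  simp only [zeroExtend_snoc]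
  have htree : ∀ d, treeAtLeast (update (zeroExtend s) n d) (n + 1) ↔
      treeAtLeast (zeroExtend s) (n + 1) := fun d =>
    (dependsOn_treeAtLeast (n + 1) fun t ht => update_of_ne (ne_of_lt ht) _ _).to_iff
  by_cases hs : treeAtLeast (zeroExtend s) (n + 1)
  · have hprod : ∀ d, ∏ t ∈ range n, nodeWeight f y (update (zeroExtend s) n d) t =
        ∏ t ∈ range n, nodeWeight f y (zeroExtend s) t := fun d =>
      prod_congr rfl fun t ht => nodeWeight_update_of_lt f y d hs (mem_range.1 ht)
    simp only [htree, hs, if_true, if_pos (treeAtLeast_mono n.le_succ hs), prod_range_succ,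
      nodeWeight_update_self f y _ hs, hprod, ENNReal.tsum_mul_left]
    refine mul_le_mul_right ?_ _
    split_ifs
    exacts [heven, hodd]
  · simp [htree, hs]

theorem one_le_prod_tilt (hy : 1 ≤ y) (hy' : y ≠ ⊤) {ω : ℕ → ℕ} {n : ℕ}
    (hω : treeAtLeast ω n) :
    1 ≤ ∏ t ∈ range n, (if Even (level ω t) then y ^ ω t else y⁻¹) := by
  rw [prod_ite, prod_pow_eq_pow_sum, prod_const, ← ENNReal.inv_pow]
  set k := #{t ∈ range n | ¬Even (level ω t)}
  calc 1 = y ^ k * (y ^ k)⁻¹ :=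
        (ENNReal.mul_inv_cancel (pow_ne_zero _ (one_pos.trans_le hy).ne')
          (ENNReal.pow_ne_top hy')).symm
    _ ≤ _ := mul_le_mul_left (pow_le_pow_right₀ hy (card_odd_level_le hω)) _

theorem prod_le_prod_nodeWeight (hy : 1 ≤ y) (hy' : y ≠ ⊤) {ω : ℕ → ℕ} {n : ℕ}
    (hω : Avoids EvenUnary n ω) :
    ∏ t ∈ range n, f (ω t) ≤ ∏ t ∈ range n, nodeWeight f y ω t := by
  have hsplit : ∏ t ∈ range n, nodeWeight f y ω t =
      (∏ t ∈ range n, f (ω t)) * ∏ t ∈ range n, (if Even (level ω t) then y ^ ω t else y⁻¹) := by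
    rw [← prod_mul_distrib]
    refine prod_congr rfl fun t ht => ?_
    have := hω.2 t (mem_range.1 ht)
    unfold nodeWeight EvenUnary at *
    split_ifs <;> tauto
  rw [hsplit]
  exact le_mul_of_one_le_right zero_le (one_le_prod_tilt y hy hy' hω.1)

theorem tsum_avoids_prod_le (hy : 1 ≤ y) (hy' : y ≠ ⊤) {c : ℝ≥0∞}
    (heven : ∑' d, (if d = 1 then 0 else f d * y ^ d) ≤ c) (hodd : ∑' d, f d * y⁻¹ ≤ c)
    (n : ℕ) :
    ∑' p : Fin n → ℕ, (if Avoids EvenUnary n (zeroExtend p)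
      then ∏ t ∈ range n, f (zeroExtend p t) else 0) ≤ c ^ n := by
  refine (ENNReal.tsum_le_tsum fun p => ?_).trans (tsum_prod_nodeWeight_le f y heven hodd n)
  split_ifs with hp hp'
  exacts [prod_le_prod_nodeWeight f y hy hy' hp, absurd hp.1 hp', zero_le, le_rfl]

end NodeWeight

section ExpTerm

open Real ENNReal

noncomputable def expTerm (μ : ℝ) (d : ℕ) : ℝ≥0∞ := ENNReal.ofReal (μ ^ d / d.factorial)

theorem hasSum_pow_div_factorial (μ : ℝ) : HasSum (fun d : ℕ => μ ^ d / d.factorial) (exp μ) :=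
  exp_eq_exp_ℝ ▸ NormedSpace.expSeries_div_hasSum_exp μ

theorem tsum_expTerm {μ : ℝ} (hμ : 0 ≤ μ) : ∑' d, expTerm μ d = ENNReal.ofReal (exp μ) := by
  rw [← (hasSum_pow_div_factorial μ).tsum_eq,
    ENNReal.ofReal_tsum_of_nonneg (fun d => by positivity) (hasSum_pow_div_factorial μ).summable]
  rfl

theorem poissonMeasure_singleton_eq {μ : ℝ} (hμ : 0 ≤ μ) (d : ℕ) :
    poissonMeasure μ.toNNReal {d} = ENNReal.ofReal (exp (-μ)) * expTerm μ d := by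
  rw [poissonMeasure_singleton, Real.coe_toNNReal μ hμ, expTerm, ← ofReal_mul (exp_pos _).le,
    mul_div_assoc]

theorem expTerm_one (μ : ℝ) : expTerm μ 1 = ENNReal.ofReal μ := by
  simp [expTerm]

theorem expTerm_eq_pow_mul {μ : ℝ} (hμ : 0 ≤ μ) (d : ℕ) :
    expTerm μ d = ENNReal.ofReal μ ^ d * expTerm 1 d := by
  rw [expTerm, expTerm, ← ofReal_pow hμ, ← ofReal_mul (by positivity), one_pow, mul_one_div]

theorem expTerm_mul_pow {μ y : ℝ} (hμ : 0 ≤ μ) (hy : 0 ≤ y) (d : ℕ) :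
    expTerm μ d * ENNReal.ofReal y ^ d = expTerm (μ * y) d := by
  rw [expTerm, expTerm, ← ofReal_pow hy, ← ofReal_mul (by positivity), mul_pow, div_mul_eq_mul_div]

/-- For `f = expTerm μ` and the weight `y`, the per-node sums in `tsum_avoids_prod_le` are
`e^{μy} - μy` at even levels and `e^μ / y` at odd levels. -/
theorem exists_tilt {μ : ℝ} (hμ : 0 < μ) :
    ∃ y c : ℝ, 1 < y ∧ 0 < c ∧ c < exp μ ∧ exp (μ * y) ≤ μ * y + c ∧ exp μ ≤ y * c := by
  have hcont : ContinuousAt (fun y => exp (μ * y) - μ * y) 1 := by fun_prop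
  have hat1 : exp (μ * 1) - μ * 1 < exp μ := by simpa using hμ
  obtain ⟨y, hy, hy1⟩ := ((hcont.eventually (gt_mem_nhds hat1)).filter_mono
    nhdsWithin_le_nhds |>.and self_mem_nhdsWithin).exists (f := 𝓝[>] 1)
  have hy0 : 0 < y := one_pos.trans hy1
  refine ⟨y, max (exp (μ * y) - μ * y) (exp μ / y), hy1, lt_max_of_lt_right (by positivity),
    max_lt hy (div_lt_self (exp_pos μ) hy1), ?_, ?_⟩
  · linarith [le_max_left (exp (μ * y) - μ * y) (exp μ / y)]
  · rw [← div_le_iff₀' hy0]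
    exact le_max_right _ _

theorem exists_tsum_avoids_prod_expTerm_le {μ : ℝ} (hμ : 0 < μ) :
    ∃ c : ℝ, 0 < c ∧ c < exp μ ∧ ∀ n, ∑' p : Fin n → ℕ, (if Avoids EvenUnary n (zeroExtend p)
      then ∏ t ∈ range n, expTerm μ (zeroExtend p t) else 0) ≤ ENNReal.ofReal c ^ n := by
  obtain ⟨y, c, hy1, hc0, hcμ, heven, hodd⟩ := exists_tilt hμ
  have hy0 : 0 < y := one_pos.trans hy1
  refine ⟨c, hc0, hcμ, tsum_avoids_prod_le _ _ (one_le_ofReal.2 hy1.le) ofReal_ne_top ?_ ?_⟩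
  · have htot := ENNReal.summable.tsum_eq_add_tsum_ite' (f := expTerm (μ * y)) 1
    rw [tsum_expTerm (by positivity), expTerm_one] at htot
    simp only [expTerm_mul_pow hμ.le hy0.le]
    refine (ENNReal.add_le_add_iff_left (ofReal_ne_top (r := μ * y))).1 ?_
    calc _ = ENNReal.ofReal (exp (μ * y)) := htot.symm
      _ ≤ ENNReal.ofReal (μ * y + c) := ofReal_le_ofReal heven
      _ = _ := ofReal_add (by positivity) hc0.le
  · rw [ENNReal.tsum_mul_right, tsum_expTerm hμ.le, ← ofReal_inv_of_pos hy0,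
      ← ofReal_mul (exp_pos μ).le]
    refine ofReal_le_ofReal ?_
    rwa [← div_eq_mul_inv, div_le_iff₀' hy0]

end ExpTerm

section Poisson

open Real ENNReal Function

theorem measure_setOf_eq_tsum {P : ℝ → Measure (ℕ → ℕ)} (hP : IsPoissonSeedFamily P)
    {lam : ℝ} (hlam : 0 < lam) {Q : (ℕ → ℕ) → Prop} {n : ℕ} (hQ : DependsOn Q (Set.Iio n)) :
    P lam {ω | Q ω} = ENNReal.ofReal (exp (-lam)) ^ n *
      ∑' p : Fin n → ℕ, if Q (zeroExtend p) then ∏ t ∈ range n, expTerm lam (zeroExtend p t)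
        else 0 := by
  have hmap : (P lam).map (restrictSeed n) = Measure.pi fun _ => poissonMeasure lam.toNNReal :=
    (hP lam hlam).2 n
  rw [hQ.setOf_eq_preimage_restrictSeed,
    ← Measure.map_apply (measurable_restrictSeed n) MeasurableSet.of_discrete, hmap,
    ← Measure.tsum_indicator_apply_singleton _ _ MeasurableSet.of_discrete,
    ← ENNReal.tsum_mul_left]
  refine tsum_congr fun p => ?_
  by_cases hp : Q (zeroExtend p)
  · simp only [Set.indicator_of_mem (show p ∈ {p | Q (zeroExtend p)} from hp), if_pos hp,
      Measure.pi_singleton, poissonMeasure_singleton_eq hlam.le, prod_mul_distrib, prod_const,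
      card_univ, Fintype.card_fin, ← zeroExtend_val p, Fin.prod_univ_eq_prod_range
        (fun t => expTerm lam (zeroExtend p t))]
  · simp [hp]

theorem exists_measure_avoids_le {P : ℝ → Measure (ℕ → ℕ)} (hP : IsPoissonSeedFamily P)
    {lam : ℝ} (hlam : 0 < lam) :
    ∃ θ < 1, ∀ n, P lam {ω | Avoids EvenUnary n ω} ≤ θ ^ n := by
  obtain ⟨c, -, hc, hbound⟩ := exists_tsum_avoids_prod_expTerm_le hlam
  refine ⟨ENNReal.ofReal (exp (-lam) * c), ofReal_lt_one.2 ?_, fun n => ?_⟩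
  · calc exp (-lam) * c < exp (-lam) * exp lam := by gcongr
      _ = 1 := by rw [← exp_add, neg_add_cancel, exp_zero]
  · rw [measure_setOf_eq_tsum hP hlam (dependsOn_avoids _ n), ofReal_mul (exp_pos _).le, mul_pow]
    exact mul_le_mul_right (hbound n) _

theorem measure_compl_hasNodeWith {P : ℝ → Measure (ℕ → ℕ)} (hP : IsPoissonSeedFamily P)
    {lam : ℝ} (hlam : 0 < lam) {R : ℕ → ℕ → Prop} (hR : ∀ l, Even l → R l 1) :
    P lam (hasNodeWith R)ᶜ =
      ∑' n, P lam {ω | Avoids R (n + 1) ω ∧ ∑ t ∈ range (n + 1), ω t = n} := by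
  set S : ℕ → Set (ℕ → ℕ) := fun n => {ω | Avoids R (n + 1) ω ∧ ∑ t ∈ range (n + 1), ω t = n}
  have hS : ∀ n ω, ω ∈ S n ↔
      ω ∈ (hasNodeWith R)ᶜ ∧ treeAtLeast ω (n + 1) ∧ ¬treeAtLeast ω (n + 2) :=
    fun n ω => avoids_and_sum_eq_iff R n ω
  have hmeas : ∀ n, MeasurableSet (S n) := fun n =>
    (dependsOn_avoids_and_sum_eq R n).measurableSet_setOf
  have hdisj : Pairwise (Disjoint on S) := by
    refine pairwise_disjoint_on S |>.2 fun m n hmn => Set.disjoint_left.2 fun ω hm hn => ?_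
    exact ((hS m ω).1 hm).2.2 (treeAtLeast_mono (by omega) ((hS n ω).1 hn).2.1)
  have hrest : ∀ N, (hasNodeWith R)ᶜ \ ⋃ n, S n ⊆ {ω | Avoids EvenUnary N ω} := by
    rintro N ω ⟨hC, hnS⟩
    simp only [Set.mem_iUnion, hS, not_exists] at hnS
    have htree : ∀ n, treeAtLeast ω (n + 1) := fun n => by
      induction n with
      | zero => exact treeAtLeast_one ω
      | succ n ih => by_contra h; exact hnS n ⟨hC, ih, h⟩
    simp only [hasNodeWith, Set.mem_compl_iff, Set.mem_ofPred_eq, not_exists, not_and] at hC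
    exact Avoids.evenUnary hR ⟨treeAtLeast_mono N.le_succ (htree N), fun t _ => hC t (htree t)⟩
  obtain ⟨θ, hθ, hbound⟩ := exists_measure_avoids_le hP hlam
  have hnull : P lam ((hasNodeWith R)ᶜ \ ⋃ n, S n) = 0 :=
    le_antisymm (ge_of_tendsto' (ENNReal.tendsto_pow_atTop_nhds_zero_of_lt_one hθ)
      fun N => (measure_mono (hrest N)).trans (hbound N)) zero_le
  rw [← measure_iUnion hdisj hmeas]
  refine le_antisymm ?_ (measure_mono (Set.iUnion_subset fun n ω hω => ((hS n ω).1 hω).1))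
  calc P lam (hasNodeWith R)ᶜ ≤ P lam (((hasNodeWith R)ᶜ \ ⋃ n, S n) ∪ ⋃ n, S n) :=
        measure_mono (Set.subset_sdiff_union _ _)
    _ ≤ P lam (⋃ n, S n) := (measure_union_le _ _).trans_eq (by rw [hnull, zero_add])

noncomputable def avoidingTreeWeight (R : ℕ → ℕ → Prop) (n : ℕ) : ℝ≥0∞ :=
  ∑' p : Fin (n + 1) → ℕ,
    if Avoids R (n + 1) (zeroExtend p) ∧ ∑ t ∈ range (n + 1), zeroExtend p t = n
    then ∏ t ∈ range (n + 1), expTerm 1 (zeroExtend p t) else 0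

theorem measure_avoids_and_sum_eq {P : ℝ → Measure (ℕ → ℕ)} (hP : IsPoissonSeedFamily P)
    {lam : ℝ} (hlam : 0 < lam) (R : ℕ → ℕ → Prop) (n : ℕ) :
    P lam {ω | Avoids R (n + 1) ω ∧ ∑ t ∈ range (n + 1), ω t = n} =
      ENNReal.ofReal (exp (-lam)) ^ (n + 1) * ENNReal.ofReal lam ^ n *
        avoidingTreeWeight R n := by
  rw [measure_setOf_eq_tsum hP hlam (dependsOn_avoids_and_sum_eq R n), mul_assoc,
    avoidingTreeWeight]
  congr 1
  rw [← ENNReal.tsum_mul_left]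
  refine tsum_congr fun p => ?_
  split_ifs with hp
  · rw [prod_congr rfl fun t _ => expTerm_eq_pow_mul hlam.le _, prod_mul_distrib,
      prod_pow_eq_pow_sum, hp.2]
  · rw [mul_zero]

theorem exists_avoidingTreeWeight_le {R : ℕ → ℕ → Prop} (hR : ∀ l, Even l → R l 1) :
    ∃ c : ℝ, 0 < c ∧ c < exp 1 ∧ ∀ n, avoidingTreeWeight R n ≤ ENNReal.ofReal c ^ (n + 1) := by
  obtain ⟨c, hc0, hc, hbound⟩ := exists_tsum_avoids_prod_expTerm_le one_pos
  refine ⟨c, hc0, hc, fun n => (ENNReal.tsum_le_tsum fun p => ?_).trans (hbound (n + 1))⟩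
  split_ifs with hp hp'
  exacts [le_rfl, absurd (hp.1.evenUnary hR) hp', zero_le, le_rfl]

theorem toReal_measure_hasNodeWith {P : ℝ → Measure (ℕ → ℕ)} (hP : IsPoissonSeedFamily P)
    {lam : ℝ} (hlam : 0 < lam) {R : ℕ → ℕ → Prop} (hR : ∀ l, Even l → R l 1) :
    (P lam (hasNodeWith R)).toReal =
      1 - exp (-lam) * ∑' n, (avoidingTreeWeight R n).toReal * (lam * exp (-lam)) ^ n := by
  have := (hP lam hlam).1
  rw [← measureReal_def, ← compl_compl (hasNodeWith R),
    probReal_compl_eq_one_sub (measurableSet_hasNodeWith R).compl, measureReal_def,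
    measure_compl_hasNodeWith hP hlam hR, ENNReal.tsum_toReal_eq fun n => measure_ne_top _ _,
    ← tsum_mul_left]
  congr 2
  ext n
  rw [measure_avoids_and_sum_eq hP hlam, toReal_mul, toReal_mul, toReal_pow, toReal_pow,
    toReal_ofReal (exp_pos _).le, toReal_ofReal hlam.le]
  ring

end Poisson

section Analytic

open Real FormalMultilinearSeries

theorem analyticOnNhd_ofScalarsSum_mul_exp_neg {c : ℕ → ℝ} {C ρ : ℝ} (hρ : 0 < ρ)
    (hρe : ρ < exp 1) (hc : ∀ n, |c n| ≤ C * ρ ^ n) :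
    AnalyticOnNhd ℝ (fun x => ofScalarsSum c (x * exp (-x))) (Set.Ici 0) := by
  intro x hx
  set r : NNReal := ⟨ρ⁻¹, by positivity⟩
  have hr : (r : ℝ) = ρ⁻¹ := rfl
  have hradius : (r : ENNReal) ≤ (ofScalars ℝ c).radius :=
    (ofScalars ℝ c).le_radius_of_bound C fun n => by
      rw [ofScalars_norm, Real.norm_eq_abs, hr, inv_pow, ← div_eq_mul_inv,
        div_le_iff₀ (by positivity)]
      exact hc n
  have hmem : x * exp (-x) ∈ Metric.eball (0 : ℝ) (ofScalars ℝ c).radius := by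
    refine lt_of_lt_of_le ?_ hradius
    rw [edist_lt_coe, ← NNReal.coe_lt_coe, coe_nndist, Real.dist_0_eq_abs,
      abs_of_nonneg (mul_nonneg hx (exp_pos _).le), hr]
    calc x * exp (-x) ≤ exp (-1) := mul_exp_neg_le_exp_neg_one x
      _ < ρ⁻¹ := by rw [exp_neg]; exact inv_strictAnti₀ hρ hρe
  exact ((ofScalars ℝ c).analyticOnNhd _ hmem).comp (f := fun x => x * exp (-x)) (by fun_prop)

theorem analyticOnNhd_measure_hasNodeWith {P : ℝ → Measure (ℕ → ℕ)}
    (hP : IsPoissonSeedFamily P) {R : ℕ → ℕ → Prop} (hR : ∀ l, Even l → R l 1) :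
    AnalyticOnNhd ℝ (fun lam => (P lam (hasNodeWith R)).toReal) (Set.Ioi 0) := by
  obtain ⟨c, hc0, hce, hW⟩ := exists_avoidingTreeWeight_le hR
  set a : ℕ → ℝ := fun n => (avoidingTreeWeight R n).toReal
  have ha : ∀ n, |a n| ≤ c * c ^ n := fun n => by
    rw [abs_of_nonneg ENNReal.toReal_nonneg, ← pow_succ']
    exact ENNReal.toReal_le_of_le_ofReal (by positivity)
      ((hW n).trans_eq (ENNReal.ofReal_pow hc0.le _).symm)
  have hseries := analyticOnNhd_ofScalarsSum_mul_exp_neg hc0 hce ha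
  refine AnalyticOnNhd.congr isOpen_Ioi
    (f := fun lam => 1 - exp (-lam) * ofScalarsSum a (lam * exp (-lam))) ?_ fun lam hlam => ?_
  · have hexp : AnalyticOnNhd ℝ (fun x => exp (-x)) (Set.Ioi 0) := fun x _ => by fun_prop
    exact analyticOnNhd_const.sub (hexp.mul (hseries.mono Set.Ioi_subset_Ici_self))
  · rw [toReal_measure_hasNodeWith hP hlam hR]
    simp only [ofScalars_sum_eq, smul_eq_mul, a]

end Analytic

end SeedTree

/-- With `A` the event that some node on an even level has exactly one child and, for a
set of levels `F`, `B F` the event that some node on an `F`-level has exactly two children,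
the function `λ ↦ P_λ(A ∪ B F)` is real analytic on `(0, ∞)` for every `F`; in particular
(`F = ∅`), `λ ↦ P_λ(A)` is real analytic on `(0, ∞)`. -/
theorem even_or_Flevel_analytic
    (P : ℝ → Measure (ℕ → ℕ)) (hP : IsPoissonSeedFamily P)
    (A : Set (ℕ → ℕ))
    (B : Set ℕ → Set (ℕ → ℕ))
    (hAdef : A = {ω | ∃ i : ℕ, treeAtLeast ω (i + 1) ∧ Even (level ω i) ∧ ω i = 1})
    (hBdef : ∀ F : Set ℕ,
      B F = {ω | ∃ i : ℕ, treeAtLeast ω (i + 1) ∧ level ω i ∈ F ∧ ω i = 2}) :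
    (∀ F : Set ℕ,
      AnalyticOnNhd ℝ (fun lam : ℝ => (P lam (A ∪ B F)).toReal) (Set.Ioi 0)) ∧
    AnalyticOnNhd ℝ (fun lam : ℝ => (P lam A).toReal) (Set.Ioi 0) := by
  have hA : A = SeedTree.hasNodeWith SeedTree.EvenUnary := hAdef
  have hAB : ∀ F, A ∪ B F =
      SeedTree.hasNodeWith fun l d => SeedTree.EvenUnary l d ∨ (l ∈ F ∧ d = 2) := fun F => by
    ext ω
    simp only [hAdef, hBdef, SeedTree.hasNodeWith, SeedTree.EvenUnary, Set.mem_union,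
      Set.mem_ofPred_eq, ← exists_or, and_or_left]
  refine ⟨fun F => ?_, ?_⟩
  · rw [hAB F]
    exact SeedTree.analyticOnNhd_measure_hasNodeWith hP fun l hl => Or.inl ⟨hl, rfl⟩
  · rw [hA]
    exact SeedTree.analyticOnNhd_measure_hasNodeWith hP fun l hl => ⟨hl, rfl⟩
end
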